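/- arXiv:2409.11503 — 4 statements merged into one kernel-verified Lean document; each statement's English description precedes it below -/
import Mathlib

section
/- Let K be a 1-symmetric convex body in ℝⁿ (invariant under coordinate sign changes and permutations of coordinates). Then |K| · sup_{y ∈ K°} ∏_{i=1}^n |y_i| ≤ 2ⁿ/n!, where K° is the polar body. -/
open MeasureTheory
open scoped RealInnerProductSpace

/-- The polar body `K° = {y : ⟨x,y⟩ ≤ 1 for all x ∈ K}`. -/
def polarSet {n : ℕ} (K : Set (EuclideanSpace ℝ (Fin n))) : Set (EuclideanSpace ℝ (Fin n)) :=
  {y | ∀ x ∈ K, ⟪x, y⟫ ≤ 1}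

/-!
For `y ∈ K°` and `x ∈ K`, flipping the signs of the coordinates of `x` to match those of `y` gives
`∑ |yᵢ| |xᵢ| = ⟪x', y⟫ ≤ 1`. So `K` lies in the weighted cross-polytope `{x : ∑ |yᵢ| |xᵢ| ≤ 1}`,
a linear image of the unit `ℓ¹` ball, of volume `2ⁿ / (n! ∏ |yᵢ|)`.
-/

section CrossPolytope

variable {ι : Type*} [Fintype ι]

theorem volume_setOf_sum_abs_le_one :
    volume {x : ι → ℝ | ∑ i, |x i| ≤ 1}
      = ENNReal.ofReal (2 ^ Fintype.card ι / (Fintype.card ι).factorial) := by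
  cases isEmpty_or_nonempty ι with
  | inl _ => simp [volume_pi]
  | inr _ =>
    have h := volume_sum_rpow_le ι (p := 1) le_rfl 1
    simp only [Real.rpow_one, div_one] at h
    rw [h, Real.Gamma_nat_eq_factorial]
    norm_num [Real.Gamma_two]

theorem volume_setOf_sum_mul_abs_le_one {c : ι → ℝ} (hc : ∀ i, 0 < c i) :
    volume {x : ι → ℝ | ∑ i, c i * |x i| ≤ 1}
      = ENNReal.ofReal (2 ^ Fintype.card ι / (Fintype.card ι).factorial / ∏ i, c i) := by
  classical
  let f : (ι → ℝ) →ₗ[ℝ] (ι → ℝ) := Matrix.toLin' (Matrix.diagonal c)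
  have hdet : LinearMap.det f = ∏ i, c i := by
    rw [LinearMap.det_toLin', Matrix.det_diagonal]
  have hprod : 0 < ∏ i, c i := Finset.prod_pos fun i _ => hc i
  have hpre : {x : ι → ℝ | ∑ i, c i * |x i| ≤ 1} = f ⁻¹' {x | ∑ i, |x i| ≤ 1} := by
    ext x
    simp [f, Matrix.mulVec_diagonal, abs_mul, abs_of_pos (hc _)]
  rw [hpre, Measure.addHaar_preimage_linearMap volume (hdet ▸ hprod.ne'), hdet,
    volume_setOf_sum_abs_le_one, abs_of_pos (inv_pos.mpr hprod),
    ← ENNReal.ofReal_mul (by positivity), inv_mul_eq_div]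

theorem EuclideanSpace.volume_setOf_sum_mul_abs_le_one {c : ι → ℝ} (hc : ∀ i, 0 < c i) :
    volume {x : EuclideanSpace ℝ ι | ∑ i, c i * |x i| ≤ 1}
      = ENNReal.ofReal (2 ^ Fintype.card ι / (Fintype.card ι).factorial / ∏ i, c i) := by
  have hmeas : MeasurableSet {x : ι → ℝ | ∑ i, c i * |x i| ≤ 1} :=
    measurableSet_le (by fun_prop) measurable_const
  rw [← _root_.volume_setOf_sum_mul_abs_le_one hc,
    ← (PiLp.volume_preserving_ofLp ι).measure_preimage hmeas.nullMeasurableSet]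
  rfl

end CrossPolytope

def IsUnconditional {ι : Type*} (K : Set (EuclideanSpace ℝ ι)) : Prop :=
  ∀ x ∈ K, ∀ ε : ι → ℝ, (∀ i, ε i = 1 ∨ ε i = -1) → WithLp.toLp 2 (fun i => ε i * x i) ∈ K

namespace IsUnconditional

variable {n : ℕ} {K : Set (EuclideanSpace ℝ (Fin n))}

theorem sum_abs_mul_abs_le_one_of_mem_polarSet (hK : IsUnconditional K)
    {x y : EuclideanSpace ℝ (Fin n)} (hx : x ∈ K) (hy : y ∈ polarSet K) :
    ∑ i, |y i| * |x i| ≤ 1 := by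
  let ε : Fin n → ℝ := fun i => if 0 ≤ x i * y i then 1 else -1
  have hε : ∀ i, ε i = 1 ∨ ε i = -1 := fun i => by unfold ε; split_ifs <;> simp
  have hterm : ∀ i, |y i| * |x i| = ε i * x i * y i := fun i => by
    rw [← abs_mul, mul_comm (y i), mul_assoc]
    unfold ε
    split_ifs with h
    · rw [abs_of_nonneg h, one_mul]
    · rw [abs_of_neg (not_le.mp h), neg_one_mul]
  have hinner := hy _ (hK x hx ε hε)
  simp only [PiLp.inner_apply, RCLike.inner_apply, conj_trivial] at hinner
  calc ∑ i, |y i| * |x i| = ∑ i, ε i * x i * y i := Finset.sum_congr rfl fun i _ => hterm i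
    _ ≤ 1 := by simpa [mul_comm] using hinner

theorem volume_toReal_mul_prod_abs_le (hK : IsUnconditional K)
    {y : EuclideanSpace ℝ (Fin n)} (hy : y ∈ polarSet K) :
    (volume K).toReal * ∏ i, |y i| ≤ 2 ^ n / n.factorial := by
  by_cases hzero : ∏ i, |y i| = 0
  · rw [hzero, mul_zero]; positivity
  have hc : ∀ i, 0 < |y i| := fun i =>
    abs_pos.mpr fun h => hzero (Finset.prod_eq_zero (Finset.mem_univ i) (by simp [h]))
  have hvol : volume K ≤ ENNReal.ofReal (2 ^ n / n.factorial / ∏ i, |y i|) := by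
    simpa using (measure_mono fun x hx => hK.sum_abs_mul_abs_le_one_of_mem_polarSet hx hy).trans_eq
      (EuclideanSpace.volume_setOf_sum_mul_abs_le_one hc)
  rw [← le_div_iff₀ (Finset.prod_pos fun i _ => hc i)]
  exact ENNReal.toReal_le_of_le_ofReal (by positivity) hvol

end IsUnconditional

theorem one_symmetric_volume_sup_prod_le_general (n : ℕ)
    (K : Set (EuclideanSpace ℝ (Fin n)))
    (hsym : ∀ x ∈ K, ∀ ε : Fin n → ℝ, (∀ i, ε i = 1 ∨ ε i = -1) →
      ∀ σ : Equiv.Perm (Fin n),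
        ((WithLp.equiv 2 (Fin n → ℝ)).symm fun i => ε i * x (σ i)) ∈ K) :
    (volume K).toReal *
        sSup ((fun y : EuclideanSpace ℝ (Fin n) => ∏ i, |y i|) '' polarSet K)
      ≤ (2 : ℝ) ^ n / (Nat.factorial n : ℝ) := by
  have hK : IsUnconditional K := fun x hx ε hε => hsym x hx ε hε 1
  rw [← smul_eq_mul, ← Real.sSup_smul_of_nonneg ENNReal.toReal_nonneg]
  refine Real.sSup_le ?_ (by positivity)
  rintro _ ⟨_, ⟨y, hy, rfl⟩, rfl⟩
  exact hK.volume_toReal_mul_prod_abs_le hy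

/-- Let `K` be a `1`-symmetric convex body in `ℝⁿ` (invariant under coordinate sign changes
and permutations of coordinates). Then `|K| · sup_{y ∈ K°} ∏ |yᵢ| ≤ 2ⁿ/n!`. -/
theorem one_symmetric_volume_sup_prod_le (n : ℕ)
    (K : Set (EuclideanSpace ℝ (Fin n)))
    (hconv : Convex ℝ K) (hcomp : IsCompact K) (hint : (interior K).Nonempty)
    (hsym : ∀ x ∈ K, ∀ ε : Fin n → ℝ, (∀ i, ε i = 1 ∨ ε i = -1) →
      ∀ σ : Equiv.Perm (Fin n),
        ((WithLp.equiv 2 (Fin n → ℝ)).symm fun i => ε i * x (σ i)) ∈ K) :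
    (volume K).toReal *
        sSup ((fun y : EuclideanSpace ℝ (Fin n) => ∏ i, |y i|) '' polarSet K)
      ≤ (2 : ℝ) ^ n / (Nat.factorial n : ℝ) :=
  one_symmetric_volume_sup_prod_le_general n K hsym
end

section
/- Let q ∈ (1,2] and K a symmetric convex body in ℝⁿ. Assuming the Blaschke–Santaló inequality |K|·|K°| ≤ |B₂ⁿ|², one has (q−1)^{1/(q−1)} |K| · (∫_{K°} |x|^{n(q−2)} dx)^{1/(q−1)} ≤ |B₂ⁿ|^{q/(q−1)}. -/
/-!
The weight `‖x‖ ^ α`, `α = n (q - 2) ∈ (-n, 0]`, is radially non-increasing, so among sets of given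
volume the centred ball maximises its integral. By the layer-cake formula the integral over `A` is
`∫₀^∞ |A ∩ {t ≤ ‖x‖ ^ α}| dt`; bounding the layers by `|A|` up to the level at which they are the
ball of volume `|A|`, and by those balls above it, gives
`(q - 1) ∫_A ‖x‖ ^ α ≤ |A| ^ (q - 1) |B₂ⁿ| ^ (2 - q)`, with equality for balls.
For `A = K°`, bounded because `0` is an interior point of `K`, raising this to the power
`1 / (q - 1)` and applying Blaschke–Santaló to `|K| |K°|` gives the claim.
-/

open MeasureTheory Real
open scoped RealInnerProductSpace

open Metric Set Module
open scoped ENNReal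

theorem setOf_le_norm_rpow_subset_closedBall {E : Type*} [SeminormedAddGroup E] {α t : ℝ}
    (hα : α < 0) (ht : 0 < t) :
    {x : E | t ≤ ‖x‖ ^ α} ⊆ closedBall 0 (t ^ α⁻¹) := by
  intro x hx
  rw [mem_closedBall_zero_iff, ← rpow_rpow_inv (norm_nonneg x) hα.ne]
  exact rpow_le_rpow_of_nonpos ht hx (inv_nonpos.mpr hα.le)

section HaarMeasure

variable {E : Type*} [NormedAddCommGroup E] [NormedSpace ℝ E] [MeasurableSpace E] [BorelSpace E]
  [FiniteDimensional ℝ E] (μ : Measure E) [μ.IsAddHaarMeasure]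

theorem lintegral_Ioi_measure_closedBall_rpow_inv {α T : ℝ} (hα : α < 0)
    (hαd : -(finrank ℝ E : ℝ) < α) (hT : 0 < T) :
    ∫⁻ t in Ioi T, μ (closedBall 0 (t ^ α⁻¹)) = μ (closedBall 0 1) *
      ENNReal.ofReal (-T ^ (finrank ℝ E / α + 1) / (finrank ℝ E / α + 1)) := by
  set s : ℝ := finrank ℝ E / α
  have hs : s < -1 := by
    rw [div_lt_iff_of_neg hα]; linarith
  have hball : EqOn (fun t ↦ μ (closedBall 0 (t ^ α⁻¹)))
      (fun t ↦ ENNReal.ofReal (t ^ s) * μ (closedBall 0 1)) (Ioi T) := by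
    intro t ht
    have ht : 0 < t := hT.trans ht
    simp only
    rw [Measure.addHaar_closedBall' μ _ (rpow_nonneg ht.le _), ← Real.rpow_natCast,
      ← rpow_mul ht.le, inv_mul_eq_div]
  have hintegrable : IntegrableOn (fun t : ℝ ↦ t ^ s) (Ioi T) := integrableOn_Ioi_rpow_of_lt hs hT
  rw [setLIntegral_congr_fun measurableSet_Ioi hball,
    lintegral_mul_const' _ _ measure_closedBall_lt_top.ne,
    ← ofReal_integral_eq_lintegral_ofReal hintegrable, integral_Ioi_rpow_of_lt hs hT, mul_comm]
  exact (ae_restrict_mem measurableSet_Ioi).mono fun t ht ↦ rpow_nonneg (hT.trans ht).le _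

theorem setLIntegral_norm_rpow_le {α T : ℝ} (hα : α < 0) (hαd : -(finrank ℝ E : ℝ) < α)
    (hT : 0 < T) (A : Set E) :
    ∫⁻ x in A, ENNReal.ofReal (‖x‖ ^ α) ∂μ ≤ μ A * ENNReal.ofReal T + μ (closedBall 0 1) *
      ENNReal.ofReal (-T ^ (finrank ℝ E / α + 1) / (finrank ℝ E / α + 1)) := by
  have hf : Measurable fun x : E ↦ ‖x‖ ^ α := measurable_norm.pow_const α
  rw [lintegral_eq_lintegral_meas_le _ (.of_forall fun x ↦ rpow_nonneg (norm_nonneg x) α)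
      hf.aemeasurable, ← Ioc_union_Ioi_eq_Ioi hT.le,
    lintegral_union measurableSet_Ioi Ioc_disjoint_Ioi_same,
    ← lintegral_Ioi_measure_closedBall_rpow_inv μ hα hαd hT]
  -- Layers of height at most `T` are bounded by `μ A`, higher ones by the balls containing them.
  refine add_le_add ?_ (setLIntegral_mono' measurableSet_Ioi fun t ht ↦ ?_)
  · calc ∫⁻ t in Ioc 0 T, μ.restrict A {x | t ≤ ‖x‖ ^ α} ≤ ∫⁻ _ in Ioc 0 T, μ A :=
          lintegral_mono fun t ↦
            (measure_mono (subset_univ _)).trans_eq (Measure.restrict_apply_univ A)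
      _ = μ A * ENNReal.ofReal T := by rw [setLIntegral_const, volume_Ioc, sub_zero]
  · exact (Measure.restrict_apply_le _ _).trans
      (measure_mono (setOf_le_norm_rpow_subset_closedBall hα (hT.trans ht)))

theorem setIntegral_norm_rpow_le {α T : ℝ} (hα : α < 0) (hαd : -(finrank ℝ E : ℝ) < α)
    (hT : 0 < T) {A : Set E} (hA : μ A ≠ ∞) :
    ∫ x in A, ‖x‖ ^ α ∂μ ≤ (μ A).toReal * T + (μ (closedBall 0 1)).toReal *
      (-T ^ (finrank ℝ E / α + 1) / (finrank ℝ E / α + 1)) := by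
  have hs : (finrank ℝ E : ℝ) / α + 1 < 0 := by
    rw [← lt_sub_iff_add_lt, zero_sub, div_lt_iff_of_neg hα]; linarith
  have htail : 0 ≤ -T ^ (finrank ℝ E / α + 1) / (finrank ℝ E / α + 1) :=
    div_nonneg_of_nonpos (neg_nonpos.2 (rpow_nonneg hT.le _)) hs.le
  have hlin := setLIntegral_norm_rpow_le μ hα hαd hT A
  rw [← ENNReal.ofReal_toReal hA,
    ← ENNReal.ofReal_toReal (measure_closedBall_lt_top (μ := μ)).ne,
    ← ENNReal.ofReal_mul ENNReal.toReal_nonneg, ← ENNReal.ofReal_mul ENNReal.toReal_nonneg,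
    ← ENNReal.ofReal_add (by positivity) (by positivity)] at hlin
  have hf : Measurable fun x : E ↦ ‖x‖ ^ α := measurable_norm.pow_const α
  rw [integral_eq_lintegral_of_nonneg_ae (.of_forall fun x ↦ rpow_nonneg (norm_nonneg x) α)
    hf.aestronglyMeasurable]
  exact ENNReal.toReal_le_of_le_ofReal (add_nonneg (mul_nonneg ENNReal.toReal_nonneg hT.le)
    (mul_nonneg ENNReal.toReal_nonneg htail)) hlin

theorem sub_one_mul_setIntegral_norm_rpow_le_of_lt {q : ℝ} (hq1 : 1 < q) (hq2 : q < 2)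
    (hd : 0 < finrank ℝ E) {A : Set E} (hA : μ A ≠ ∞) :
    (q - 1) * ∫ x in A, ‖x‖ ^ ((finrank ℝ E : ℝ) * (q - 2)) ∂μ ≤
      (μ A).toReal ^ (q - 1) * (μ (closedBall 0 1)).toReal ^ (2 - q) := by
  rcases eq_or_ne (μ A) 0 with hA0 | hA0
  · rw [setIntegral_measure_zero _ hA0, hA0, ENNReal.toReal_zero, zero_rpow (by linarith)]
    simp
  have hω : 0 < (μ (closedBall (0 : E) 1)).toReal :=
    ENNReal.toReal_pos (measure_closedBall_pos μ 0 one_pos).ne' measure_closedBall_lt_top.ne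
  obtain ⟨u, hu, hAu⟩ : ∃ u > 0, (μ A).toReal = (μ (closedBall (0 : E) 1)).toReal * u :=
    ⟨(μ A).toReal / _, div_pos (ENNReal.toReal_pos hA0 hA) hω, by field_simp⟩
  have hd : (0 : ℝ) < finrank ℝ E := Nat.cast_pos.mpr hd
  have hq : q - 2 ≠ 0 := by linarith
  have hq' : q - 1 ≠ 0 := by linarith
  have hα : (finrank ℝ E : ℝ) * (q - 2) < 0 := mul_neg_of_pos_of_neg hd (by linarith)
  have hs : (finrank ℝ E : ℝ) / (finrank ℝ E * (q - 2)) + 1 = (q - 1) / (q - 2) := by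
    field_simp; ring
  -- Truncate at the level `u ^ (q - 2)`, whose superlevel set is the ball of volume `μ A`.
  have hI := setIntegral_norm_rpow_le μ hα (by nlinarith) (rpow_pos_of_pos hu (q - 2)) hA
  rw [hs, ← rpow_mul hu.le, mul_div_cancel₀ _ hq, hAu, mul_assoc,
    ← rpow_one_add' hu.le (by linarith), show 1 + (q - 2) = q - 1 by ring] at hI
  rw [hAu]
  set ω := (μ (closedBall (0 : E) 1)).toReal
  calc (q - 1) * ∫ x in A, ‖x‖ ^ ((finrank ℝ E : ℝ) * (q - 2)) ∂μ
      ≤ (q - 1) * (ω * u ^ (q - 1) + ω * (-u ^ (q - 1) / ((q - 1) / (q - 2)))) := by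
        gcongr
    _ = ω * u ^ (q - 1) := by field_simp; ring
    _ = (ω * u) ^ (q - 1) * ω ^ (2 - q) := by
        rw [mul_rpow hω.le hu.le, mul_right_comm, ← rpow_add' hω.le (by norm_num)]
        norm_num

theorem sub_one_mul_setIntegral_norm_rpow_le {q : ℝ} (hq1 : 1 < q) (hq2 : q ≤ 2) {A : Set E}
    (hA : μ A ≠ ∞) :
    (q - 1) * ∫ x in A, ‖x‖ ^ ((finrank ℝ E : ℝ) * (q - 2)) ∂μ ≤
      (μ A).toReal ^ (q - 1) * (μ (closedBall 0 1)).toReal ^ (2 - q) := by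
  rcases hq2.eq_or_lt with rfl | hq2
  · norm_num [measureReal_def]
  rcases (finrank ℝ E).eq_zero_or_pos with hd | hd
  · have : Subsingleton E := finrank_zero_iff.mp hd
    have hAω : (μ A).toReal ≤ (μ (closedBall (0 : E) 1)).toReal :=
      ENNReal.toReal_mono measure_closedBall_lt_top.ne
        (measure_mono (by simp [Subsingleton.eq_univ_of_nonempty]))
    rw [hd, Nat.cast_zero, zero_mul]
    simp only [Real.rpow_zero, setIntegral_const, smul_eq_mul, mul_one, measureReal_def]
    calc (q - 1) * (μ A).toReal ≤ (μ A).toReal := by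
          nlinarith [ENNReal.toReal_nonneg (a := μ A)]
      _ = (μ A).toReal ^ (q - 1) * (μ A).toReal ^ (2 - q) := by
          rw [← rpow_add' ENNReal.toReal_nonneg (by norm_num)]; norm_num
      _ ≤ _ := by gcongr
  exact sub_one_mul_setIntegral_norm_rpow_le_of_lt μ hq1 hq2 hd hA

end HaarMeasure

theorem Convex.zero_mem_interior_of_neg_mem {E : Type*} [AddCommGroup E] [Module ℝ E]
    [TopologicalSpace E] [IsTopologicalAddGroup E] [ContinuousSMul ℝ E] {K : Set E}
    (hK : Convex ℝ K) (hint : (interior K).Nonempty) (hsym : ∀ x ∈ K, -x ∈ K) :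
    (0 : E) ∈ interior K := by
  obtain ⟨x, hx⟩ := hint
  rw [← midpoint_self_neg ℝ x]
  exact hK.openSegment_interior_self_subset_interior hx (hsym x (interior_subset hx))
    (midpoint_mem_openSegment x (-x))

theorem polarSet_subset_closedBall {n : ℕ} {K : Set (EuclideanSpace ℝ (Fin n))} {r : ℝ}
    (hr : 0 < r) (hK : closedBall 0 r ⊆ K) : polarSet K ⊆ closedBall 0 r⁻¹ := by
  intro y hy
  rw [mem_closedBall_zero_iff]
  rcases eq_or_ne y 0 with rfl | hy0
  · simpa using hr.le
  have hy0 : 0 < ‖y‖ := norm_pos_iff.mpr hy0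
  have hx : (r / ‖y‖) • y ∈ K := hK <| by
    rw [mem_closedBall_zero_iff, norm_smul, norm_div, norm_norm, Real.norm_of_nonneg hr.le,
      div_mul_cancel₀ _ hy0.ne']
  have hxy := hy _ hx
  rw [real_inner_smul_left, real_inner_self_eq_norm_sq] at hxy
  rw [← one_div, le_div_iff₀' hr]
  calc r * ‖y‖ = r / ‖y‖ * ‖y‖ ^ 2 := by field_simp
    _ ≤ 1 := hxy

theorem isBounded_polarSet {n : ℕ} {K : Set (EuclideanSpace ℝ (Fin n))}
    (hK : (0 : EuclideanSpace ℝ (Fin n)) ∈ interior K) : Bornology.IsBounded (polarSet K) := by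
  obtain ⟨r, hr, hrK⟩ := nhds_basis_closedBall.mem_iff.1 (mem_interior_iff_mem_nhds.1 hK)
  exact isBounded_closedBall.subset (polarSet_subset_closedBall hr hrK)

theorem rot_inv_bs_consequence_general (n : ℕ) (q : ℝ) (hq1 : 1 < q) (hq2 : q ≤ 2)
    (K : Set (EuclideanSpace ℝ (Fin n)))
    (hconv : Convex ℝ K) (hint : (interior K).Nonempty)
    (hsym : ∀ x ∈ K, -x ∈ K)
    (hBS : (volume K).toReal * (volume (polarSet K)).toReal
        ≤ (volume (Metric.closedBall (0 : EuclideanSpace ℝ (Fin n)) 1)).toReal ^ 2) :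
    (q - 1) ^ (1 / (q - 1)) * (volume K).toReal *
        (∫ x in polarSet K, ‖x‖ ^ ((n : ℝ) * (q - 2))) ^ (1 / (q - 1))
      ≤ (volume (Metric.closedBall (0 : EuclideanSpace ℝ (Fin n)) 1)).toReal ^ (q / (q - 1)) := by
  have hq : 0 < q - 1 := by linarith
  have hpolar : volume (polarSet K) ≠ ∞ :=
    (isBounded_polarSet (hconv.zero_mem_interior_of_neg_mem hint hsym)).measure_lt_top.ne
  have hI := sub_one_mul_setIntegral_norm_rpow_le volume hq1 hq2 hpolar
  rw [finrank_euclideanSpace_fin] at hI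
  set I := ∫ x in polarSet K, ‖x‖ ^ ((n : ℝ) * (q - 2))
  set W := (volume (polarSet K)).toReal
  set ω := (volume (closedBall (0 : EuclideanSpace ℝ (Fin n)) 1)).toReal
  have hI0 : 0 ≤ I := integral_nonneg fun x ↦ rpow_nonneg (norm_nonneg x) _
  have hω : 0 < ω :=
    ENNReal.toReal_pos (measure_closedBall_pos _ 0 one_pos).ne' measure_closedBall_lt_top.ne
  calc (q - 1) ^ (1 / (q - 1)) * (volume K).toReal * I ^ (1 / (q - 1))
      = (volume K).toReal * ((q - 1) * I) ^ (1 / (q - 1)) := by rw [mul_rpow hq.le hI0]; ring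
    _ ≤ (volume K).toReal * (W ^ (q - 1) * ω ^ (2 - q)) ^ (1 / (q - 1)) := by gcongr
    _ = (volume K).toReal * W * ω ^ ((2 - q) / (q - 1)) := by
        rw [mul_rpow (by positivity) (by positivity), ← rpow_mul ENNReal.toReal_nonneg,
          ← rpow_mul hω.le, mul_one_div_cancel hq.ne', Real.rpow_one, mul_one_div, mul_assoc]
    _ ≤ ω ^ 2 * ω ^ ((2 - q) / (q - 1)) := by gcongr
    _ = ω ^ (q / (q - 1)) := by
        rw [← Real.rpow_natCast, ← rpow_add hω]; congr 1; field_simp; ring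

/-- Let `q ∈ (1,2]` and `K` a symmetric convex body in `ℝⁿ`. Assuming the Blaschke–Santaló
inequality `|K|·|K°| ≤ |B₂ⁿ|²`, one has
`(q−1)^{1/(q−1)} |K| · (∫_{K°} |x|^{n(q−2)} dx)^{1/(q−1)} ≤ |B₂ⁿ|^{q/(q−1)}`. -/
theorem rot_inv_bs_consequence (n : ℕ) (q : ℝ) (hq1 : 1 < q) (hq2 : q ≤ 2)
    (K : Set (EuclideanSpace ℝ (Fin n)))
    (hconv : Convex ℝ K) (hcomp : IsCompact K) (hint : (interior K).Nonempty)
    (hsym : ∀ x ∈ K, -x ∈ K)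
    (hBS : (volume K).toReal * (volume (polarSet K)).toReal
        ≤ (volume (Metric.closedBall (0 : EuclideanSpace ℝ (Fin n)) 1)).toReal ^ 2) :
    (q - 1) ^ (1 / (q - 1)) * (volume K).toReal *
        (∫ x in polarSet K, ‖x‖ ^ ((n : ℝ) * (q - 2))) ^ (1 / (q - 1))
      ≤ (volume (Metric.closedBall (0 : EuclideanSpace ℝ (Fin n)) 1)).toReal ^ (q / (q - 1)) :=
  rot_inv_bs_consequence_general n q hq1 hq2 K hconv hint hsym hBS
end

section
/- Let p > 1 and V : (0,∞)ⁿ → ℝ be C² and positively p-homogeneous. Then the following are equivalent: (1) for all a, b ∈ (0,∞)ⁿ, ⟨a, ∇V(b)⟩ ≥ p·V(a^{1/p} b^{(p−1)/p}) (coordinatewise powers and products); (2) the function x ↦ V(x₁^{1/p},…,xₙ^{1/p}) is concave on (0,∞)ⁿ. -/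
/-!
Put `W x = V (x ^ (1 / p))`. Since `V` is `p`-homogeneous, `W` is positively `1`-homogeneous, so
Euler's identity `DW x x = W x` holds, and the first-order characterisation of concavity collapses
to `W y ≤ DW x y` for all `x, y` in the orthant: tangent hyperplanes of `W` pass through the
origin. By the chain rule, `DW (b ^ p) (a * b ^ (p - 1)) = DV b a / p`, while
`W (a * b ^ (p - 1)) = V (a ^ (1 / p) * b ^ ((p - 1) / p))`; as `(a, b) ↦ (b ^ p, a * b ^ (p - 1))`
maps onto all pairs of points of the orthant, this tangent inequality is exactly (1).
-/

open Real

section ConcaveFirstOrder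

variable {E : Type*} [NormedAddCommGroup E] [NormedSpace ℝ E]

theorem ConcaveOn.le_add_fderiv {s : Set E} {f : E → ℝ} {f' : E →L[ℝ] ℝ} {x y : E}
    (hf : ConcaveOn ℝ s f) (hx : x ∈ s) (hy : y ∈ s) (hf' : HasFDerivAt f f' x) :
    f y ≤ f x + f' (y - x) := by
  set g := AffineMap.lineMap (k := ℝ) x y
  have hg : HasDerivAt (f ∘ g) (f' (y - x)) 0 := by
    have hf'0 : HasFDerivAt f f' (g 0) := by simpa [g] using hf'
    exact hf'0.comp_hasDerivAt 0 AffineMap.hasDerivAt_lineMap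
  have hslope := (hf.comp_affineMap g).slope_le_of_hasDerivAt
    (by simpa [g] using hx) (by simpa [g] using hy) zero_lt_one hg
  simp only [slope_def_field, Function.comp_apply, g, AffineMap.lineMap_apply_zero,
    AffineMap.lineMap_apply_one, sub_zero, div_one] at hslope
  linarith

theorem HasFDerivAt.apply_self_eq_of_homogeneous {W : E → ℝ} {W' : E →L[ℝ] ℝ} {x : E}
    (hW : HasFDerivAt W W' x) (hhom : ∀ t : ℝ, 0 < t → W (t • x) = t * W x) : W' x = W x := by
  have hW1 : HasFDerivAt W W' ((fun t : ℝ => t • x) 1) := by simpa using hW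
  have hsmul : HasDerivAt (fun t : ℝ => t • x) x 1 := by
    simpa using (hasDerivAt_id (1 : ℝ)).smul_const x
  have hray : HasDerivAt (fun t : ℝ => W (t • x)) (W' x) 1 := hW1.comp_hasDerivAt 1 hsmul
  have hline : HasDerivAt (fun t : ℝ => t * W x) (W' x) 1 :=
    hray.congr_of_eventuallyEq <|
      (eventually_gt_nhds zero_lt_one).mono fun t ht => (hhom t ht).symm
  simpa using hline.unique ((hasDerivAt_id (1 : ℝ)).mul_const (W x))

theorem concaveOn_iff_le_fderiv_of_homogeneous {s : Set E} {W : E → ℝ} (hs : Convex ℝ s)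
    (hW : ∀ x ∈ s, DifferentiableAt ℝ W x)
    (hhom : ∀ x ∈ s, ∀ t : ℝ, 0 < t → W (t • x) = t * W x) :
    ConcaveOn ℝ s W ↔ ∀ x ∈ s, ∀ y ∈ s, W y ≤ fderiv ℝ W x y := by
  have euler (x) (hx : x ∈ s) : fderiv ℝ W x x = W x :=
    (hW x hx).hasFDerivAt.apply_self_eq_of_homogeneous (hhom x hx)
  constructor
  · intro hc x hx y hy
    have := hc.le_add_fderiv hx hy (hW x hx).hasFDerivAt
    rw [map_sub, euler x hx] at this
    linarith
  · refine fun h => ⟨hs, fun x hx y hy a b ha hb hab => ?_⟩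
    have hz := hs hx hy ha hb hab
    calc a • W x + b • W y
        ≤ a • fderiv ℝ W (a • x + b • y) x + b • fderiv ℝ W (a • x + b • y) y := by
          gcongr <;> exact h _ hz _ ‹_›
      _ = W (a • x + b • y) := by rw [← map_smul, ← map_smul, ← map_add, euler _ hz]

end ConcaveFirstOrder

section PositiveOrthant

variable {ι : Type*}

theorem convex_setOf_forall_pos : Convex ℝ {x : ι → ℝ | ∀ i, 0 < x i} := by
  simpa [Set.pi] using convex_pi (s := Set.univ) fun (_ : ι) _ => convex_Ioi (0 : ℝ)

theorem isOpen_setOf_forall_pos [Finite ι] : IsOpen {x : ι → ℝ | ∀ i, 0 < x i} := by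
  simpa [Set.pi] using isOpen_set_pi (i := Set.univ) (s := fun (_ : ι) => Set.Ioi (0 : ℝ))
    Set.finite_univ fun _ _ => isOpen_Ioi

variable [Fintype ι] {V : (ι → ℝ) → ℝ} {x : ι → ℝ}

theorem HasFDerivAt.comp_rpow_const {V' : (ι → ℝ) →L[ℝ] ℝ} {r : ℝ} (hx : ∀ i, 0 < x i)
    (hV : HasFDerivAt V V' (fun i => x i ^ r)) :
    HasFDerivAt (fun y => V (fun i => y i ^ r))
      (V'.comp (ContinuousLinearMap.pi fun i => (r * x i ^ (r - 1)) • ContinuousLinearMap.proj i))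
      x :=
  hV.comp x <| hasFDerivAt_pi.2 fun i =>
    (hasDerivAt_rpow_const (Or.inl (hx i).ne')).comp_hasFDerivAt (f := fun y : ι → ℝ => y i) x
      (hasFDerivAt_apply i x)

theorem fderiv_comp_rpow_const_apply {r : ℝ} (hx : ∀ i, 0 < x i)
    (hV : DifferentiableAt ℝ V (fun i => x i ^ r)) (y : ι → ℝ) :
    fderiv ℝ (fun y => V (fun i => y i ^ r)) x y
      = fderiv ℝ V (fun i => x i ^ r) (fun i => r * x i ^ (r - 1) * y i) := by
  rw [(hV.hasFDerivAt.comp_rpow_const hx).fderiv]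
  rfl

end PositiveOrthant

section PowerSubstitution

variable {ι : Type*} {V : (ι → ℝ) → ℝ} {p : ℝ}

theorem comp_rpow_one_div_smul (hp : 0 < p)
    (hhom : ∀ t : ℝ, 0 < t → ∀ x : ι → ℝ, (∀ i, 0 < x i) → V (t • x) = t ^ p * V x)
    {x : ι → ℝ} (hx : ∀ i, 0 < x i) {t : ℝ} (ht : 0 < t) :
    V (fun i => (t • x) i ^ (1 / p)) = t * V (fun i => x i ^ (1 / p)) := by
  have hsplit : (fun i => (t • x) i ^ (1 / p)) = t ^ (1 / p) • fun i => x i ^ (1 / p) :=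
    funext fun i => mul_rpow ht.le (hx i).le
  rw [hsplit, hhom _ (rpow_pos_of_pos ht _) _ fun i => rpow_pos_of_pos (hx i) _,
    ← rpow_mul ht.le, one_div_mul_cancel hp.ne', rpow_one]

theorem exists_eq_rpow_and_eq_mul_rpow_sub_one (hp : 0 < p) {x y : ι → ℝ} (hx : ∀ i, 0 < x i)
    (hy : ∀ i, 0 < y i) :
    ∃ a b : ι → ℝ, (∀ i, 0 < a i) ∧ (∀ i, 0 < b i) ∧
      x = (fun i => b i ^ p) ∧ y = fun i => a i * b i ^ (p - 1) := by
  refine ⟨fun i => y i * x i ^ (1 / p - 1), fun i => x i ^ (1 / p),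
    fun i => mul_pos (hy i) (rpow_pos_of_pos (hx i) _), fun i => rpow_pos_of_pos (hx i) _,
    funext fun i => ?_, funext fun i => ?_⟩
  · rw [← rpow_mul (hx i).le, one_div_mul_cancel hp.ne', rpow_one]
  · rw [mul_assoc, ← rpow_mul (hx i).le, ← rpow_add (hx i)]
    have : 1 / p - 1 + 1 / p * (p - 1) = 0 := by field_simp; ring
    rw [this, rpow_zero, mul_one]

theorem le_fderiv_comp_rpow_one_div_iff [Fintype ι] (hp : 0 < p) {a b : ι → ℝ}
    (ha : ∀ i, 0 < a i) (hb : ∀ i, 0 < b i) (hV : DifferentiableAt ℝ V b) :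
    V (fun i => (a i * b i ^ (p - 1)) ^ (1 / p))
        ≤ fderiv ℝ (fun z => V (fun i => z i ^ (1 / p))) (fun i => b i ^ p)
          (fun i => a i * b i ^ (p - 1)) ↔
      p * V (fun i => a i ^ (1 / p) * b i ^ ((p - 1) / p)) ≤ fderiv ℝ V b a := by
  have hbase : (fun i => (b i ^ p) ^ (1 / p)) = b :=
    funext fun i => by rw [← rpow_mul (hb i).le, mul_one_div_cancel hp.ne', rpow_one]
  have hpoint : (fun i => (a i * b i ^ (p - 1)) ^ (1 / p))
      = fun i => a i ^ (1 / p) * b i ^ ((p - 1) / p) :=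
    funext fun i => by
      rw [mul_rpow (ha i).le (rpow_pos_of_pos (hb i) _).le, ← rpow_mul (hb i).le, mul_one_div]
  have hdir : (fun i => 1 / p * (b i ^ p) ^ (1 / p - 1) * (a i * b i ^ (p - 1)))
      = (1 / p) • a :=
    funext fun i => by
      have hcancel : (b i ^ p) ^ (1 / p - 1) * b i ^ (p - 1) = 1 := by
        rw [← rpow_mul (hb i).le, ← rpow_add (hb i)]
        have : p * (1 / p - 1) + (p - 1) = 0 := by field_simp; ring
        rw [this, rpow_zero]
      simp only [Pi.smul_apply, smul_eq_mul]
      linear_combination (1 / p * a i) * hcancel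
  rw [fderiv_comp_rpow_const_apply (fun i => rpow_pos_of_pos (hb i) p) (by rwa [hbase]), hbase,
    hpoint, hdir, map_smul, smul_eq_mul, ← mul_le_mul_iff_of_pos_left hp, ← mul_assoc,
    mul_one_div_cancel hp.ne', one_mul]

end PowerSubstitution

/-- Let `p > 1` and `V : (0,∞)ⁿ → ℝ` be C² and positively `p`-homogeneous. Then the following
are equivalent:
(1) for all `a, b ∈ (0,∞)ⁿ`, `⟨a, ∇V(b)⟩ ≥ p·V(a^{1/p} b^{(p−1)/p})` (coordinatewise);
(2) `x ↦ V(x₁^{1/p},…,xₙ^{1/p})` is concave on `(0,∞)ⁿ`. -/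
theorem homogeneous_gradient_ineq_iff_concave (n : ℕ) (p : ℝ) (hp : 1 < p)
    (V : (Fin n → ℝ) → ℝ)
    (hC2 : ContDiffOn ℝ 2 V {x | ∀ i, 0 < x i})
    (hhom : ∀ t : ℝ, 0 < t → ∀ x : Fin n → ℝ, (∀ i, 0 < x i) → V (t • x) = t ^ p * V x) :
    (∀ a b : Fin n → ℝ, (∀ i, 0 < a i) → (∀ i, 0 < b i) →
        p * V (fun i => a i ^ (1 / p) * b i ^ ((p - 1) / p)) ≤ fderiv ℝ V b a)
      ↔ ConcaveOn ℝ {x : Fin n → ℝ | ∀ i, 0 < x i}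
          (fun x => V (fun i => x i ^ (1 / p))) := by
  have hp0 : 0 < p := zero_lt_one.trans hp
  have hV (x : Fin n → ℝ) (hx : ∀ i, 0 < x i) : DifferentiableAt ℝ V x :=
    (hC2.contDiffAt (isOpen_setOf_forall_pos.mem_nhds hx)).differentiableAt (by norm_num)
  have hW (x : Fin n → ℝ) (hx : ∀ i, 0 < x i) :
      DifferentiableAt ℝ (fun z => V (fun i => z i ^ (1 / p))) x :=
    ((hV _ fun i => rpow_pos_of_pos (hx i) _).hasFDerivAt.comp_rpow_const hx).differentiableAt
  rw [concaveOn_iff_le_fderiv_of_homogeneous (s := {x : Fin n → ℝ | ∀ i, 0 < x i})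
    convex_setOf_forall_pos hW fun x hx t ht => comp_rpow_one_div_smul hp0 hhom hx ht]
  constructor
  · intro h x hx y hy
    obtain ⟨a, b, ha, hb, rfl, rfl⟩ := exists_eq_rpow_and_eq_mul_rpow_sub_one hp0 hx hy
    exact (le_fderiv_comp_rpow_one_div_iff hp0 ha hb (hV b hb)).2 (h a b ha hb)
  · intro h a b ha hb
    exact (le_fderiv_comp_rpow_one_div_iff hp0 ha hb (hV b hb)).1
      (h _ (fun i => rpow_pos_of_pos (hb i) p) _
        fun i => mul_pos (ha i) (rpow_pos_of_pos (hb i) _))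
end

section
/- On the sphere S^{n−1} ⊂ ℝⁿ, consider the operator L f = Δ_{S^{n−1}} f + (2/q − 1)⟨ω, ∇_{S^{n−1}} f⟩ with ω = (1/x₁, …, 1/xₙ), defined on the open positive orthant of the sphere, where q > 1. Then L(x_i²) = −(4n/q)(x_i² − 1/n) for each coordinate function x_i restricted to S^{n−1}. -/
/-!
The extension `F(y) = (yᵢ/‖y‖)²` of `xᵢ²` is `0`-homogeneous, so its Euclidean Laplacian and
gradient on the unit sphere are the spherical ones. Differentiating twice,
`∂ⱼF = 2yᵢδᵢⱼ/‖y‖² − 2yᵢ²yⱼ/‖y‖⁴`, and at a point `x` of the sphere both `ΔF(x)` and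
`∑ⱼ xⱼ⁻¹ ∂ⱼF(x)` equal `2(1 − n xᵢ²)`. Hence `L(xᵢ²) = (1 + (2/q − 1)) · 2(1 − n xᵢ²)
= −(4n/q)(xᵢ² − 1/n)`.
-/

open Real

/-- The Euclidean Laplacian `Δg(x) = ∑ᵢ ∂²g/∂xᵢ²(x)`. Via the relation
`Δ = ∂²_r + ((n−1)/r)∂_r + r^{−2}Δ_{S^{n−1}}` applied to a `0`-homogeneous extension,
it computes the spherical Laplace–Beltrami operator on the unit sphere. -/
noncomputable def lapE {n : ℕ} (g : EuclideanSpace ℝ (Fin n) → ℝ)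
    (x : EuclideanSpace ℝ (Fin n)) : ℝ :=
  ∑ i, fderiv ℝ (fun y => fderiv ℝ g y (EuclideanSpace.single i 1)) x
    (EuclideanSpace.single i 1)

section InnerProductSpace

open scoped RealInnerProductSpace

variable {E : Type*} [NormedAddCommGroup E] [InnerProductSpace ℝ E] (ℓ : E →L[ℝ] ℝ)

theorem hasFDerivAt_inv_norm_sq {y : E} (hy : y ≠ 0) :
    HasFDerivAt (fun y : E => (‖y‖ ^ 2)⁻¹) (-(2 / ‖y‖ ^ 4) • innerSL ℝ y) y :=
  ((hasDerivAt_inv (by positivity)).comp_hasFDerivAt y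
    (hasStrictFDerivAt_norm_sq y).hasFDerivAt).congr_fderiv <| by
    ext v
    simp only [smul_apply, coe_innerSL_apply, nsmul_eq_mul, smul_eq_mul]
    ring

theorem fderiv_div_norm_sq_apply {y : E} (hy : y ≠ 0) (v : E) :
    fderiv ℝ (fun y => (ℓ y / ‖y‖) ^ 2) y v
      = 2 * ℓ y * ℓ v / ‖y‖ ^ 2 - 2 * ℓ y ^ 2 * ⟪y, v⟫ / ‖y‖ ^ 4 := by
  have h : HasFDerivAt (fun y => ℓ y ^ 2 * (‖y‖ ^ 2)⁻¹) _ y :=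
    (ℓ.hasFDerivAt.pow 2).mul (hasFDerivAt_inv_norm_sq hy)
  simp_rw [div_pow, div_eq_mul_inv]
  rw [h.fderiv]
  simp only [add_apply, smul_apply, coe_innerSL_apply, nsmul_eq_mul, smul_eq_mul]
  ring

theorem fderiv_fderiv_div_norm_sq_apply {x : E} (hx : x ≠ 0) (v : E) :
    fderiv ℝ (fun y => fderiv ℝ (fun y => (ℓ y / ‖y‖) ^ 2) y v) x v
      = 2 * ℓ v ^ 2 / ‖x‖ ^ 2 - 8 * ℓ x * ℓ v * ⟪x, v⟫ / ‖x‖ ^ 4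
        - 2 * ℓ x ^ 2 * ‖v‖ ^ 2 / ‖x‖ ^ 4 + 8 * ℓ x ^ 2 * ⟪x, v⟫ ^ 2 / ‖x‖ ^ 6 := by
  have hderiv : (fun y => fderiv ℝ (fun y => (ℓ y / ‖y‖) ^ 2) y v) =ᶠ[nhds x]
      fun y => 2 * ℓ v * ℓ y * (‖y‖ ^ 2)⁻¹ - 2 * ℓ y ^ 2 * ⟪y, v⟫ * ((‖y‖ ^ 2)⁻¹) ^ 2 := by
    filter_upwards [isOpen_ne.mem_nhds hx] with y hy
    rw [fderiv_div_norm_sq_apply ℓ hy]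
    ring
  have h : HasFDerivAt
      (fun y => 2 * ℓ v * ℓ y * (‖y‖ ^ 2)⁻¹ - 2 * ℓ y ^ 2 * ⟪y, v⟫ * ((‖y‖ ^ 2)⁻¹) ^ 2) _ x :=
    ((ℓ.hasFDerivAt.const_mul (2 * ℓ v)).mul (hasFDerivAt_inv_norm_sq hx)).sub
      ((((ℓ.hasFDerivAt.pow 2).const_mul 2).mul
          ((hasFDerivAt_id x).inner ℝ (hasFDerivAt_const v x))).mul
        ((hasFDerivAt_inv_norm_sq hx).pow 2))
  rw [hderiv.fderiv_eq, h.fderiv]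
  simp only [sub_apply, add_apply, smul_apply, coe_innerSL_apply, smul_eq_mul, nsmul_eq_mul,
    id_eq, Pi.mul_apply, Nat.add_one_sub_one, pow_one, ContinuousLinearMap.comp_apply,
    ContinuousLinearMap.prod_apply, ContinuousLinearMap.id_apply, zero_apply,
    fderivInnerCLM_apply, inner_zero_right,
    real_inner_self_eq_norm_sq]
  field_simp
  ring

end InnerProductSpace

section Euclidean

variable {n : ℕ} (i : Fin n) {x : EuclideanSpace ℝ (Fin n)}

theorem fderiv_coord_div_norm_sq_single (hx : x ≠ 0) (j : Fin n) :
    fderiv ℝ (fun y : EuclideanSpace ℝ (Fin n) => (y i / ‖y‖) ^ 2) x (EuclideanSpace.single j 1)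
      = (if i = j then 2 * x i / ‖x‖ ^ 2 else 0) - 2 * x i ^ 2 * x j / ‖x‖ ^ 4 := by
  refine (fderiv_div_norm_sq_apply (EuclideanSpace.proj i) hx _).trans ?_
  simp only [PiLp.proj_apply, PiLp.single_apply, EuclideanSpace.inner_single_right,
    RCLike.conj_to_real]
  split_ifs <;> ring

theorem fderiv_fderiv_coord_div_norm_sq_single (hx : x ≠ 0) (j : Fin n) :
    fderiv ℝ (fun y => fderiv ℝ (fun y : EuclideanSpace ℝ (Fin n) => (y i / ‖y‖) ^ 2) y
        (EuclideanSpace.single j 1)) x (EuclideanSpace.single j 1)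
      = (if i = j then 2 / ‖x‖ ^ 2 - 8 * x i ^ 2 / ‖x‖ ^ 4 else 0)
        + (8 * x i ^ 2 * x j ^ 2 / ‖x‖ ^ 6 - 2 * x i ^ 2 / ‖x‖ ^ 4) := by
  refine (fderiv_fderiv_div_norm_sq_apply (EuclideanSpace.proj i) hx _).trans ?_
  simp only [PiLp.proj_apply, PiLp.single_apply, EuclideanSpace.inner_single_right,
    RCLike.conj_to_real, PiLp.norm_single, norm_one]
  split_ifs with h
  · subst h; ring
  · ring

theorem lapE_coord_div_norm_sq (hx : x ≠ 0) :
    lapE (fun y : EuclideanSpace ℝ (Fin n) => (y i / ‖y‖) ^ 2) x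
      = 2 * (‖x‖ ^ 2 - n * x i ^ 2) / ‖x‖ ^ 4 := by
  simp only [lapE, fderiv_fderiv_coord_div_norm_sq_single i hx, Finset.sum_add_distrib,
    Finset.sum_ite_eq, Finset.mem_univ, if_true, Finset.sum_sub_distrib, ← Finset.mul_sum,
    ← Finset.sum_div, ← EuclideanSpace.real_norm_sq_eq, Finset.sum_const, Finset.card_univ,
    Fintype.card_fin, nsmul_eq_mul]
  have hnorm : ‖x‖ ≠ 0 := norm_ne_zero_iff.mpr hx
  field_simp
  ring

theorem sum_inv_mul_fderiv_coord_div_norm_sq (hx : ∀ j, x j ≠ 0) :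
    ∑ j, (1 / x j) * fderiv ℝ (fun y : EuclideanSpace ℝ (Fin n) => (y i / ‖y‖) ^ 2) x
        (EuclideanSpace.single j 1)
      = 2 * (‖x‖ ^ 2 - n * x i ^ 2) / ‖x‖ ^ 4 := by
  have hx0 : x ≠ 0 := fun h => hx i (by simp [h])
  have hterm : ∀ j,
      (1 / x j) * ((if i = j then 2 * x i / ‖x‖ ^ 2 else 0) - 2 * x i ^ 2 * x j / ‖x‖ ^ 4)
        = (if i = j then 2 / ‖x‖ ^ 2 else 0) - 2 * x i ^ 2 / ‖x‖ ^ 4 := by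
    intro j
    have hxj := hx j
    split_ifs with h
    · subst h; field_simp
    · field_simp; ring
  simp only [fderiv_coord_div_norm_sq_single i hx0, hterm, Finset.sum_sub_distrib,
    Finset.sum_ite_eq, Finset.mem_univ, if_true, Finset.sum_const, Finset.card_univ,
    Fintype.card_fin, nsmul_eq_mul]
  have hnorm : ‖x‖ ≠ 0 := norm_ne_zero_iff.mpr hx0
  field_simp

end Euclidean

theorem spherical_operator_coord_sq_general (n : ℕ) (q : ℝ)
    (x : EuclideanSpace ℝ (Fin n)) (hx : ‖x‖ = 1) (hposx : ∀ i, 0 < x i) (i : Fin n) :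
    lapE (fun y : EuclideanSpace ℝ (Fin n) => (y i / ‖y‖) ^ 2) x
      + (2 / q - 1) *
          ∑ j, (1 / x j) *
            fderiv ℝ (fun y : EuclideanSpace ℝ (Fin n) => (y i / ‖y‖) ^ 2) x
              (EuclideanSpace.single j 1)
      = -((4 * (n : ℝ)) / q) * (x i ^ 2 - 1 / (n : ℝ)) := by
  have hn : (n : ℝ) ≠ 0 := Nat.cast_ne_zero.mpr i.pos.ne'
  rw [lapE_coord_div_norm_sq i (norm_ne_zero_iff.mp (by simp [hx])),
    sum_inv_mul_fderiv_coord_div_norm_sq i fun j => (hposx j).ne', hx]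
  field_simp
  ring

/-- On `S^{n−1}`, consider `L f = Δ_{S^{n−1}} f + (2/q − 1)⟨ω, ∇_{S^{n−1}} f⟩` with
`ω = (1/x₁, …, 1/xₙ)` on the positive orthant of the sphere, `q > 1`. Then
`L(xᵢ²) = −(4n/q)(xᵢ² − 1/n)` for each coordinate function `xᵢ` restricted to the sphere.
The spherical Laplacian and gradient of `xᵢ²` are realized through its `0`-homogeneous
extension `F(y) = (yᵢ/|y|)²`. -/
theorem spherical_operator_coord_sq (n : ℕ) (q : ℝ) (hq : 1 < q)
    (x : EuclideanSpace ℝ (Fin n)) (hx : ‖x‖ = 1) (hposx : ∀ i, 0 < x i) (i : Fin n) :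
    lapE (fun y : EuclideanSpace ℝ (Fin n) => (y i / ‖y‖) ^ 2) x
      + (2 / q - 1) *
          ∑ j, (1 / x j) *
            fderiv ℝ (fun y : EuclideanSpace ℝ (Fin n) => (y i / ‖y‖) ^ 2) x
              (EuclideanSpace.single j 1)
      = -((4 * (n : ℝ)) / q) * (x i ^ 2 - 1 / (n : ℝ)) :=
  spherical_operator_coord_sq_general n q x hx hposx i
end
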